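/- Subthreshold decay in the SIR model with natural death rates (Situations 1 and 3): if S(0) ≥ 0, I(0) ≥ 0, and b·S(0) ≤ c + m', then I is nonincreasing on [0,∞). -/

import Mathlib

/-!
`I` and `S` solve linear equations `x' = a(t) x` with continuous coefficients, so they stay
nonnegative. Then `S' = -(b I + m) S ≤ 0`, hence `b S(t) ≤ b S(0) ≤ c + m'`, and
`I' = I (b S - c - m') ≤ 0`.
-/

open Set

/- `f * exp (-∫ a)` has derivative zero. Integrating `a (max s t₀)` instead of `a` gives a primitive
that is differentiable everywhere, not only within `[t₀, ∞)`. -/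
theorem nonneg_of_hasDerivAt_mul_self {a f : ℝ → ℝ} {t₀ : ℝ} (ha : ContinuousOn a (Ici t₀))
    (hf : ∀ t ≥ t₀, HasDerivAt f (a t * f t) t) (h₀ : 0 ≤ f t₀) {t : ℝ} (ht : t₀ ≤ t) :
    0 ≤ f t := by
  set A : ℝ → ℝ := fun u => ∫ s in t₀..u, a (max s t₀)
  have ha_ext : Continuous fun s => a (max s t₀) :=
    ha.comp_continuous (continuous_id.max continuous_const) fun s => le_max_right s t₀
  have hA : ∀ u ≥ t₀, HasDerivAt A (a u) u := fun u hu => by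
    simpa [max_eq_left hu] using ha_ext.integral_hasStrictDerivAt t₀ u |>.hasDerivAt
  have hg : ∀ u ≥ t₀, HasDerivAt (fun u => f u * Real.exp (-A u)) 0 u := fun u hu =>
    ((hf u hu).mul (hA u hu).neg.exp).congr_deriv (by ring)
  have hconst := constant_of_has_deriv_right_zero
    (fun u hu => (hg u hu.1).continuousAt.continuousWithinAt)
    (fun u hu => (hg u hu.1).hasDerivWithinAt) t ⟨ht, le_rfl⟩
  have hg_nonneg : 0 ≤ f t * Real.exp (-A t) := by simpa [hconst, A] using h₀
  exact nonneg_of_mul_nonneg_left hg_nonneg (Real.exp_pos _)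

theorem antitoneOn_Ici_of_hasDerivAt_nonpos {f f' : ℝ → ℝ} {t₀ : ℝ}
    (hf : ∀ t ≥ t₀, HasDerivAt f (f' t) t) (hf' : ∀ t > t₀, f' t ≤ 0) :
    AntitoneOn f (Ici t₀) := by
  refine antitoneOn_of_hasDerivWithinAt_nonpos (f' := f') (convex_Ici t₀)
    (fun t ht => (hf t ht).continuousAt.continuousWithinAt) ?_ ?_
  · intro t ht
    rw [interior_Ici] at ht ⊢
    exact (hf t (le_of_lt ht)).hasDerivWithinAt
  · simpa only [interior_Ici, mem_Ioi] using hf'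

theorem sir_death_situations13_subthreshold_informed_decreases_general
    (b c m m' : ℝ) (hb : 0 < b) (hm : 0 ≤ m)
    (S I : ℝ → ℝ)
    (hS : ∀ t ≥ (0 : ℝ), HasDerivAt S (-(b * I t * S t) - m * S t) t)
    (hI : ∀ t ≥ (0 : ℝ), HasDerivAt I (b * I t * S t - c * I t - m' * I t) t)
    (hS0 : 0 ≤ S 0) (hI0 : 0 ≤ I 0) (hsub : b * S 0 ≤ c + m') :
    AntitoneOn I (Set.Ici (0 : ℝ)) := by
  have hS_cont : ContinuousOn S (Ici 0) := fun t ht => (hS t ht).continuousAt.continuousWithinAt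
  have hI_cont : ContinuousOn I (Ici 0) := fun t ht => (hI t ht).continuousAt.continuousWithinAt
  have hI_nonneg : ∀ t ≥ (0 : ℝ), 0 ≤ I t := fun t =>
    nonneg_of_hasDerivAt_mul_self (a := fun t => b * S t - c - m')
      (((continuousOn_const.mul hS_cont).sub continuousOn_const).sub continuousOn_const)
      (fun t ht => (hI t ht).congr_deriv (by ring)) hI0
  have hS_nonneg : ∀ t ≥ (0 : ℝ), 0 ≤ S t := fun t =>
    nonneg_of_hasDerivAt_mul_self (a := fun t => -(b * I t) - m)
      ((continuousOn_const.mul hI_cont).neg.sub continuousOn_const)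
      (fun t ht => (hS t ht).congr_deriv (by ring)) hS0
  have hS_anti : AntitoneOn S (Ici 0) :=
    antitoneOn_Ici_of_hasDerivAt_nonpos hS fun t ht => by
      nlinarith [mul_nonneg (mul_nonneg hb.le (hI_nonneg t ht.le)) (hS_nonneg t ht.le),
        mul_nonneg hm (hS_nonneg t ht.le)]
  refine antitoneOn_Ici_of_hasDerivAt_nonpos hI fun t ht => ?_
  have hbS : b * S t ≤ c + m' :=
    (mul_le_mul_of_nonneg_left (hS_anti self_mem_Ici ht.le ht.le) hb.le).trans hsub
  nlinarith [mul_nonneg (hI_nonneg t ht.le) (sub_nonneg.2 hbS)]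

/-- Subthreshold decay in the SIR model with natural death rates (Situations 1
and 3): if `b * S 0 ≤ c + m'`, then `I` is nonincreasing on `[0,∞)`. -/
theorem sir_death_situations13_subthreshold_informed_decreases
    (b c m m' : ℝ) (hb : 0 < b) (hc : 0 < c) (hm : 0 ≤ m) (hm' : 0 ≤ m')
    (S I R : ℝ → ℝ)
    (hS : ∀ t ≥ (0 : ℝ), HasDerivAt S (-(b * I t * S t) - m * S t) t)
    (hI : ∀ t ≥ (0 : ℝ), HasDerivAt I (b * I t * S t - c * I t - m' * I t) t)
    (hR : ∀ t ≥ (0 : ℝ), HasDerivAt R (c * I t - m * R t) t)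
    (hS0 : 0 ≤ S 0) (hI0 : 0 ≤ I 0) (hsub : b * S 0 ≤ c + m') :
    AntitoneOn I (Set.Ici (0 : ℝ)) :=
  sir_death_situations13_subthreshold_informed_decreases_general b c m m' hb hm S I hS hI hS0 hI0
    hsub
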